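/- arXiv:2410.09304 — 4 statements merged into one kernel-verified Lean document; each statement's English description precedes it below -/
import Mathlib

section
/- Let G be a connected graph, let c be a locating rainbow coloring of G, and let w ≠ z be vertices such that d(w,y) = d(z,y) for every vertex y ∈ V(G) \ {w,z}. Then c(w) ≠ c(z). -/
open SimpleGraph

/-- A walk is a rainbow vertex path: it is a path and its internal vertices
receive pairwise distinct colors. -/
def IsRainbowPath {V : Type*} (G : SimpleGraph V) {k : ℕ} (c : V → Fin k)
    {u v : V} (p : G.Walk u v) : Prop :=
  p.IsPath ∧ (p.support.tail.dropLast.map c).Nodup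

/-- A rainbow vertex coloring: every two vertices are joined by a rainbow vertex path. -/
def IsRVColoring {V : Type*} (G : SimpleGraph V) {k : ℕ} (c : V → Fin k) : Prop :=
  ∀ u v : V, ∃ p : G.Walk u v, IsRainbowPath G c p

/-- The rainbow vertex connection number. -/
noncomputable def rvc {V : Type*} (G : SimpleGraph V) : ℕ :=
  sInf {k | ∃ c : V → Fin k, IsRVColoring G c}

/-- The rainbow code of a vertex: its vector of distances to the color classes. -/
noncomputable def rainbowCode {V : Type*} (G : SimpleGraph V) {k : ℕ}
    (c : V → Fin k) (v : V) : Fin k → ℕ :=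
  fun i => sInf {d | ∃ w, c w = i ∧ G.dist v w = d}

/-- A locating rainbow coloring: a rainbow vertex coloring whose rainbow codes
are pairwise distinct. -/
def IsLocatingRVColoring {V : Type*} (G : SimpleGraph V) {k : ℕ} (c : V → Fin k) : Prop :=
  IsRVColoring G c ∧ Function.Injective (rainbowCode G c)

/-- The locating rainbow connection number. -/
noncomputable def rvcl {V : Type*} (G : SimpleGraph V) : ℕ :=
  sInf {k | ∃ c : V → Fin k, IsLocatingRVColoring G c}

/-- The edge corona `G ⋄ H`: one copy of `G` together with one copy of `H`
for each edge of `G`, where both endpoints of the edge are joined to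
every vertex of the corresponding copy of `H`. -/
def edgeCorona {V W : Type*} (G : SimpleGraph V) (H : SimpleGraph W) :
    SimpleGraph (V ⊕ (G.edgeSet × W)) where
  Adj x y :=
    match x, y with
    | .inl u, .inl v => G.Adj u v
    | .inl u, .inr (e, _) => u ∈ (e : Sym2 V)
    | .inr (e, _), .inl u => u ∈ (e : Sym2 V)
    | .inr (e, w), .inr (e', w') => e = e' ∧ H.Adj w w'
  symm := by
    constructor
    rintro (u | ⟨e, w⟩) (v | ⟨e', w'⟩) h
    · exact h.symm
    · exact h
    · exact h
    · exact ⟨h.1.symm, h.2.symm⟩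
  loopless := by
    constructor
    rintro (u | ⟨e, w⟩) h
    · exact G.irrefl h
    · exact H.irrefl h.2

/-- A cut vertex: a vertex whose removal disconnects the graph. -/
def IsCutVertex {V : Type*} (G : SimpleGraph V) (v : V) : Prop :=
  ¬ (G.induce {u | u ≠ v}).Connected

/-! If `c w = c z`, the transposition of `w` and `z` preserves every color class, and by the twin
hypothesis it carries distances from `z` to distances from `w`. Hence `w` and `z` have the same
rainbow code, which a locating coloring forbids. -/

theorem rainbowCode_eq_of_equiv {V : Type*} (G : SimpleGraph V) {k : ℕ} (c : V → Fin k)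
    (σ : V ≃ V) (hσ : ∀ x, c (σ x) = c x) {u v : V} (hd : ∀ x, G.dist v (σ x) = G.dist u x) :
    rainbowCode G c v = rainbowCode G c u := by
  funext i
  refine congrArg sInf (Set.ext fun d => ⟨?_, ?_⟩)
  · rintro ⟨x, rfl, rfl⟩
    exact ⟨σ.symm x, by rw [← hσ, σ.apply_symm_apply], by rw [← hd, σ.apply_symm_apply]⟩
  · rintro ⟨x, rfl, rfl⟩
    exact ⟨σ x, hσ x, hd x⟩

theorem dist_swap_eq_of_twins {V : Type*} [DecidableEq V] (G : SimpleGraph V) {w z : V}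
    (h : ∀ y : V, y ≠ w → y ≠ z → G.dist w y = G.dist z y) (x : V) :
    G.dist w (Equiv.swap w z x) = G.dist z x := by
  rcases eq_or_ne x w with rfl | hxw
  · rw [Equiv.swap_apply_left, dist_comm]
  rcases eq_or_ne x z with rfl | hxz
  · rw [Equiv.swap_apply_right, dist_self, dist_self]
  · rw [Equiv.swap_apply_of_ne_of_ne hxw hxz, h x hxw hxz]

theorem stmt2_general {V : Type*} (G : SimpleGraph V) {k : ℕ}
    (c : V → Fin k) (hc : IsLocatingRVColoring G c) (w z : V) (hwz : w ≠ z)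
    (h : ∀ y : V, y ≠ w → y ≠ z → G.dist w y = G.dist z y) :
    c w ≠ c z := by
  classical
  intro hcwz
  have hswap : ∀ x, c (Equiv.swap w z x) = c x := fun x => by
    rcases eq_or_ne x w with rfl | hxw
    · rw [Equiv.swap_apply_left, hcwz]
    rcases eq_or_ne x z with rfl | hxz
    · rw [Equiv.swap_apply_right, hcwz]
    · rw [Equiv.swap_apply_of_ne_of_ne hxw hxz]
  exact hwz (hc.2 (rainbowCode_eq_of_equiv G c _ hswap (dist_swap_eq_of_twins G h)))

theorem stmt2 {V : Type*} (G : SimpleGraph V) (hG : G.Connected) {k : ℕ}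
    (c : V → Fin k) (hc : IsLocatingRVColoring G c) (w z : V) (hwz : w ≠ z)
    (h : ∀ y : V, y ≠ w → y ≠ z → G.dist w y = G.dist z y) :
    c w ≠ c z :=
  stmt2_general G c hc w z hwz h
end

section
/- For any connected graphs G_m of order m ≥ 2 and H_n of order n ≥ 2, rvc(G_m ⋄ H_n) ≥ rvc(G_m), where ⋄ denotes the edge corona. -/
open SimpleGraph

/-!
Restrict a rainbow vertex colouring of `G ⋄ H` with `rvc (G ⋄ H)` colours (it exists since
`G ⋄ H` is connected) to the vertices of `G`. A rainbow path of `G ⋄ H` between two vertices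
of `G` leaves `G` only for runs inside a single copy of `H`, over an edge `xy` of `G`; such a
run is entered from `x` and left to `y`, so it can be replaced by the edge `xy` itself. The
internal vertices of the resulting path of `G` form a subsequence of those of the original
path, so it is again rainbow.
-/

theorem List.Sublist.dropLast {α : Type*} {l₁ l₂ : List α} (h : l₁.Sublist l₂) :
    l₁.dropLast.Sublist l₂.dropLast := by
  simpa only [List.tail_reverse, List.reverse_sublist] using h.reverse.tail

section RainbowPath

variable {V V' : Type*} {G : SimpleGraph V} {G' : SimpleGraph V'} {k : ℕ}

theorem IsRainbowPath.of_map_support_sublist {f : V → V'} {c : V' → Fin k} {u' v' : V'}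
    {p : G'.Walk u' v'} (hp : IsRainbowPath G' c p) {u v : V} {q : G.Walk u v}
    (hsub : (q.support.map f).Sublist p.support) :
    IsRainbowPath G (c ∘ f) q := by
  refine ⟨(Walk.isPath_def q).mpr ((hsub.nodup hp.1.support_nodup).of_map f), ?_⟩
  have hint : (q.support.tail.dropLast.map f).Sublist p.support.tail.dropLast := by
    simpa only [List.map_tail, List.map_dropLast] using hsub.tail.dropLast
  simpa only [List.map_map] using (hint.map c).nodup hp.2

theorem isRVColoring_of_injective {c : V → Fin k}
    (hG : G.Preconnected) (hc : Function.Injective c) : IsRVColoring G c := by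
  classical
  intro u v
  obtain ⟨p⟩ := hG u v
  refine ⟨p.toPath, p.toPath.2, ?_⟩
  exact ((List.dropLast_sublist _).trans (List.tail_sublist _)).nodup
    p.toPath.2.support_nodup |>.map hc

theorem rvc_le_of_isRVColoring {c : V → Fin k} (hc : IsRVColoring G c) : rvc G ≤ k :=
  Nat.sInf_le (s := {k | ∃ c : V → Fin k, IsRVColoring G c}) ⟨c, hc⟩

theorem exists_isRVColoring_rvc [Finite V] (hG : G.Preconnected) :
    ∃ c : V → Fin (rvc G), IsRVColoring G c := by
  have := Fintype.ofFinite V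
  exact Nat.sInf_mem (s := {k | ∃ c : V → Fin k, IsRVColoring G c})
    ⟨_, _, isRVColoring_of_injective hG (Fintype.equivFin V).injective⟩

end RainbowPath

namespace edgeCorona

variable {V W : Type*} {G : SimpleGraph V} {H : SimpleGraph W}

def inlHom : G →g edgeCorona G H where
  toFun := Sum.inl
  map_rel' h := h

theorem exists_reachable_inl (a : V ⊕ (G.edgeSet × W)) :
    ∃ u : V, (edgeCorona G H).Reachable a (Sum.inl u) := by
  rcases a with u | ⟨⟨e, he⟩, w⟩
  · exact ⟨u, Reachable.refl _⟩
  · induction e using Sym2.ind with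
    | _ x y => exact ⟨x, Adj.reachable (Sym2.mem_mk_left x y)⟩

theorem preconnected (hG : G.Preconnected) : (edgeCorona G H).Preconnected := by
  intro a b
  obtain ⟨u, hu⟩ := exists_reachable_inl (H := H) a
  obtain ⟨v, hv⟩ := exists_reachable_inl (H := H) b
  exact hu.trans (((hG u v).map inlHom).trans hv.symm)

/-- The second alternative is the state inside a detour through a copy of `H` entered from `u`. -/
theorem exists_walk_map_support_sublist_cons_tail {a : V ⊕ (G.edgeSet × W)} {v : V}
    (p : (edgeCorona G H).Walk a (Sum.inl v)) (hp : p.IsPath) (u : V)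
    (hu : a = Sum.inl u ∨ (∃ x : G.edgeSet × W, a = Sum.inr x ∧ u ∈ (x.1 : Sym2 V)) ∧
      Sum.inl u ∉ p.support) :
    ∃ q : G.Walk u v, (q.support.map Sum.inl).Sublist (Sum.inl u :: p.support.tail) := by
  generalize hv : (Sum.inl v : V ⊕ (G.edgeSet × W)) = z at p
  induction p generalizing u with
  | nil =>
    rcases hu with rfl | ⟨⟨x, rfl, -⟩, -⟩
    · cases hv
      exact ⟨.nil, by simp⟩
    · cases hv
  | @cons a b _ h p ih =>
    have hp' := hp.of_cons
    rcases hu with rfl | ⟨⟨x, rfl, hux⟩, hu_notMem⟩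
    · rcases b with b | y
      · obtain ⟨q, hq⟩ := ih b hv hp' (.inl rfl)
        rw [p.cons_tail_support] at hq
        exact ⟨.cons (show G.Adj u b from h) q, by simpa using hq⟩
      · have hu_notMem : Sum.inl u ∉ p.support := ((Walk.cons_isPath_iff h p).mp hp).2
        obtain ⟨q, hq⟩ := ih u hv hp' (.inr ⟨⟨y, rfl, h⟩, hu_notMem⟩)
        exact ⟨q, hq.trans ((List.tail_sublist _).cons_cons _)⟩
    · rcases b with b | y
      · have hub_ne : u ≠ b := by
          rintro rfl
          exact hu_notMem (by simp)
        have hub : G.Adj u b := by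
          rw [← mem_edgeSet, ← (Sym2.mem_and_mem_iff hub_ne).mp ⟨hux, h⟩]
          exact x.1.2
        obtain ⟨q, hq⟩ := ih b hv hp' (.inl rfl)
        rw [p.cons_tail_support] at hq
        exact ⟨.cons hub q, by simpa using hq⟩
      · have hu_notMem' : Sum.inl u ∉ p.support := fun h' => hu_notMem (by simp [h'])
        obtain ⟨q, hq⟩ := ih u hv hp' (.inr ⟨⟨y, rfl, h.1 ▸ hux⟩, hu_notMem'⟩)
        exact ⟨q, hq.trans ((List.tail_sublist _).cons_cons _)⟩

theorem exists_walk_map_support_sublist {u v : V}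
    (p : (edgeCorona G H).Walk (Sum.inl u) (Sum.inl v)) (hp : p.IsPath) :
    ∃ q : G.Walk u v, (q.support.map Sum.inl).Sublist p.support := by
  simpa only [p.cons_tail_support] using
    exists_walk_map_support_sublist_cons_tail p hp u (.inl rfl)

end edgeCorona

theorem IsRVColoring.comp_inl {V W : Type*} {G : SimpleGraph V} {H : SimpleGraph W} {k : ℕ}
    {c : V ⊕ (G.edgeSet × W) → Fin k} (hc : IsRVColoring (edgeCorona G H) c) :
    IsRVColoring G (c ∘ Sum.inl) := by
  intro u v
  obtain ⟨p, hp⟩ := hc (Sum.inl u) (Sum.inl v)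
  obtain ⟨q, hq⟩ := edgeCorona.exists_walk_map_support_sublist p hp.1
  exact ⟨q, hp.of_map_support_sublist hq⟩

theorem rvc_le_rvc_edgeCorona {V W : Type*} [Finite V] [Finite W] {G : SimpleGraph V}
    (H : SimpleGraph W) (hG : G.Preconnected) : rvc G ≤ rvc (edgeCorona G H) := by
  obtain ⟨c, hc⟩ := exists_isRVColoring_rvc (edgeCorona.preconnected (H := H) hG)
  exact rvc_le_of_isRVColoring hc.comp_inl

theorem stmt4_general {V W : Type*} [Fintype V] [Fintype W] (G : SimpleGraph V) (H : SimpleGraph W)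
    (hG : G.Connected) :
    rvc G ≤ rvc (edgeCorona G H) :=
  rvc_le_rvc_edgeCorona H hG.preconnected

theorem stmt4 {V W : Type*} [Fintype V] [Fintype W] (G : SimpleGraph V) (H : SimpleGraph W)
    (hG : G.Connected) (hH : H.Connected)
    (hm : 2 ≤ Fintype.card V) (hn : 2 ≤ Fintype.card W) :
    rvc G ≤ rvc (edgeCorona G H) :=
  stmt4_general G H hG
end

section
/- For any connected graph G_m of order m ≥ 2 and complete graph K_n of order n ≥ 2, rvcl(G_m ⋄ K_n) ≥ n + 1. -/
open SimpleGraph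

/-!
The `n` vertices of a copy of `K_n` are pairwise twins, and the transposition of two twins of
the same colour is a colour-preserving automorphism, so it would give them the same rainbow
code. Hence a locating colouring uses `n` distinct colours on each copy. With only `n` colours,
an endpoint `u` of the corresponding edge and the vertex of the copy coloured like `u` both see
every other colour at distance `1`, so they share the code that is `0` at their colour and `1`
elsewhere.
-/

namespace SimpleGraph

variable {V V' : Type*} {G : SimpleGraph V} {G' : SimpleGraph V'}

theorem Hom.edist_le (f : G →g G') (u v : V) : G'.edist (f u) (f v) ≤ G.edist u v := by
  by_cases huv : G.Reachable u v
  · obtain ⟨p, hp⟩ := huv.exists_walk_length_eq_edist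
    calc G'.edist (f u) (f v) ≤ (p.map f).length := SimpleGraph.edist_le _
      _ = G.edist u v := by rw [Walk.length_map, hp]
  · rw [edist_eq_top_of_not_reachable huv]
    exact le_top

theorem Iso.edist_eq (f : G ≃g G') (u v : V) : G'.edist (f u) (f v) = G.edist u v :=
  (Hom.edist_le f.toHom u v).antisymm <| by
    simpa using Hom.edist_le f.symm.toHom (f u) (f v)

theorem Iso.dist_eq (f : G ≃g G') (u v : V) : G'.dist (f u) (f v) = G.dist u v := by
  rw [dist, dist, Iso.edist_eq]

def AreTwins (G : SimpleGraph V) (x y : V) : Prop :=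
  ∀ z, z ≠ x → z ≠ y → (G.Adj x z ↔ G.Adj y z)

theorem areTwins_top (x y : V) : (⊤ : SimpleGraph V).AreTwins x y :=
  fun _ hx hy => by simp [hx.symm, hy.symm]

def AreTwins.swapIso [DecidableEq V] {x y : V} (h : G.AreTwins x y) : G ≃g G where
  toEquiv := Equiv.swap x y
  map_rel_iff' {a b} := by
    have h' : ∀ z, z ≠ x → z ≠ y → (G.Adj z x ↔ G.Adj z y) := fun z hx hy => by
      simpa only [adj_comm] using h z hx hy
    by_cases hax : a = x <;> by_cases hay : a = y <;> by_cases hbx : b = x <;>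
      by_cases hby : b = y <;>
      simp_all [Equiv.swap_apply_of_ne_of_ne, adj_comm]

@[simp]
theorem AreTwins.swapIso_apply [DecidableEq V] {x y : V} (h : G.AreTwins x y) (z : V) :
    h.swapIso z = Equiv.swap x y z :=
  rfl

end SimpleGraph

open SimpleGraph

section RainbowCode

variable {V : Type*} {G : SimpleGraph V} {k : ℕ} {c : V → Fin k}

theorem rainbowCode_apply_self_color (v : V) : rainbowCode G c v (c v) = 0 :=
  Nat.sInf_eq_zero.mpr <| .inl ⟨v, rfl, dist_self⟩

theorem rainbowCode_apply_iso (f : G ≃g G) (hc : ∀ x, c (f x) = c x) (v : V) :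
    rainbowCode G c (f v) = rainbowCode G c v := by
  ext i
  show sInf _ = sInf _
  congr 1
  ext d
  show (∃ w, _) ↔ ∃ w, _
  rw [f.surjective.exists]
  simp only [hc, Iso.dist_eq]

theorem SimpleGraph.AreTwins.rainbowCode_eq {x y : V} (h : G.AreTwins x y) (hc : c x = c y) :
    rainbowCode G c x = rainbowCode G c y := by
  classical
  have hσ : ∀ z, c (Equiv.swap x y z) = c z := fun z => by
    rcases eq_or_ne z x with rfl | hzx
    · simp [hc]
    rcases eq_or_ne z y with rfl | hzy
    · simp [hc]
    · rw [Equiv.swap_apply_of_ne_of_ne hzx hzy]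
  simpa using (rainbowCode_apply_iso h.swapIso hσ x).symm

theorem rainbowCode_eq_of_forall_exists_adj (hG : G.Preconnected) {v : V}
    (h : ∀ i ≠ c v, ∃ w, c w = i ∧ G.Adj v w) :
    rainbowCode G c v = fun i => if i = c v then 0 else 1 := by
  ext i
  split_ifs with hi
  · exact hi ▸ rainbowCode_apply_self_color v
  obtain ⟨w, hw, hvw⟩ := h i hi
  have hle : rainbowCode G c v i ≤ 1 := Nat.sInf_le ⟨w, hw, dist_eq_one_iff_adj.mpr hvw⟩
  have hmem : rainbowCode G c v i ∈ {d | ∃ w, c w = i ∧ G.dist v w = d} :=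
    Nat.sInf_mem ⟨1, w, hw, dist_eq_one_iff_adj.mpr hvw⟩
  obtain ⟨w', hw', hd⟩ := hmem
  have hne : G.dist v w' ≠ 0 := fun h0 =>
    hi (hw' ▸ congrArg c ((hG v w').dist_eq_zero_iff.mp h0).symm)
  omega

theorem exists_isLocatingRVColoring [Finite V] (hG : G.Preconnected) :
    ∃ (k : ℕ) (c : V → Fin k), IsLocatingRVColoring G c := by
  classical
  set c := Finite.equivFin V
  refine ⟨_, c, fun u v => ?_, fun x y hxy => ?_⟩
  · obtain ⟨p, hp⟩ := (hG u v).some.toPath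
    refine ⟨p, hp, ?_⟩
    have hsub : p.support.tail.dropLast.Sublist p.support :=
      (List.dropLast_sublist _).trans (List.tail_sublist _)
    exact (hsub.nodup hp.support_nodup).map c.injective
  · have hy : rainbowCode G c y (c x) = G.dist y x := by
      have : {d | ∃ w, c w = c x ∧ G.dist y w = d} = {G.dist y x} := by
        ext d
        simp [c.injective.eq_iff]
      simp only [rainbowCode, this, csInf_singleton]
    have := rainbowCode_apply_self_color (G := G) (c := c) x
    rw [hxy, hy] at this
    exact ((hG y x).dist_eq_zero_iff.mp this).symm

end RainbowCode

section EdgeCorona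

variable {V W : Type*} {G : SimpleGraph V} {H : SimpleGraph W}

theorem edgeCorona_preconnected (hG : G.Preconnected) : (edgeCorona G H).Preconnected := by
  have hbase : ∀ x, ∃ u, (edgeCorona G H).Reachable x (.inl u) := by
    rintro (u | ⟨⟨e, he⟩, w⟩)
    · exact ⟨u, .rfl⟩
    · induction e with
      | h u v => exact ⟨u, Adj.reachable (Sym2.mem_mk_left u v)⟩
  intro x y
  obtain ⟨u, hu⟩ := hbase x
  obtain ⟨v, hv⟩ := hbase y
  exact hu.trans (((hG u v).map ⟨Sum.inl, id⟩).trans hv.symm)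

theorem areTwins_edgeCorona_inr {w₁ w₂ : W} (h : H.AreTwins w₁ w₂) (e : G.edgeSet) :
    (edgeCorona G H).AreTwins (.inr (e, w₁)) (.inr (e, w₂)) := by
  rintro (u | ⟨e', w⟩) h₁ h₂
  · exact Iff.rfl
  · refine and_congr_right fun he => h w ?_ ?_ <;> rintro rfl
    exacts [h₁ (he ▸ rfl), h₂ (he ▸ rfl)]

theorem add_one_le_of_injective_rainbowCode {n k : ℕ} {u v : V} (hG : G.Preconnected)
    (huv : G.Adj u v) {c : V ⊕ (G.edgeSet × Fin n) → Fin k}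
    (hc : Function.Injective (rainbowCode (edgeCorona G (⊤ : SimpleGraph (Fin n))) c)) :
    n + 1 ≤ k := by
  set e : G.edgeSet := ⟨s(u, v), huv⟩
  have hGH := edgeCorona_preconnected (H := (⊤ : SimpleGraph (Fin n))) hG
  have hinj : Function.Injective fun w => c (.inr (e, w)) := fun w₁ w₂ h => by
    simpa using hc ((areTwins_edgeCorona_inr (areTwins_top w₁ w₂) e).rainbowCode_eq h)
  have hnk : n ≤ k := by simpa using Fintype.card_le_of_injective _ hinj
  by_contra hlt
  have hsurj : Function.Surjective fun w => c (.inr (e, w)) :=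
    ((Fintype.bijective_iff_injective_and_card _).mpr ⟨hinj, by simp; omega⟩).2
  obtain ⟨w₀, hw₀ : c (.inr (e, w₀)) = c (.inl u)⟩ := hsurj (c (.inl u))
  have hcode_u := rainbowCode_eq_of_forall_exists_adj hGH (v := .inl u) fun i _ =>
    let ⟨w, hw⟩ := hsurj i
    ⟨_, hw, Sym2.mem_mk_left u v⟩
  have hcode_w₀ := rainbowCode_eq_of_forall_exists_adj hGH (v := .inr (e, w₀)) fun i hi =>
    let ⟨w, hw⟩ := hsurj i
    ⟨_, hw, rfl, fun h => hi (h ▸ hw).symm⟩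
  exact Sum.inl_ne_inr (hc (by rw [hcode_u, hcode_w₀, hw₀]))

end EdgeCorona

theorem stmt5_general {V : Type*} [Fintype V] (G : SimpleGraph V) (n : ℕ)
    (hG : G.Connected) (hm : 2 ≤ Fintype.card V) :
    n + 1 ≤ rvcl (edgeCorona G (⊤ : SimpleGraph (Fin n))) := by
  have : Nontrivial V := Fintype.one_lt_card_iff_nontrivial.mp hm
  obtain ⟨u, -⟩ := exists_pair_ne V
  obtain ⟨v, huv⟩ := hG.preconnected.exists_adj_of_nontrivial u
  have hGH := edgeCorona_preconnected (H := (⊤ : SimpleGraph (Fin n))) hG.preconnected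
  exact le_csInf (exists_isLocatingRVColoring hGH)
    fun k ⟨c, hc⟩ => add_one_le_of_injective_rainbowCode hG.preconnected huv hc.2

theorem stmt5 {V : Type*} [Fintype V] (G : SimpleGraph V) (n : ℕ)
    (hG : G.Connected) (hm : 2 ≤ Fintype.card V) (hn : 2 ≤ n) :
    n + 1 ≤ rvcl (edgeCorona G (⊤ : SimpleGraph (Fin n))) :=
  stmt5_general G n hG hm
end

section
/- The diameter of the edge corona P_m ⋄ K_n of a path of order m ≥ 2 with a complete graph of order n ≥ 2 equals m − 1. -/
open SimpleGraph

/-!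
The path `P_m` sits isometrically inside `P_m ⋄ H`: the inclusion is a graph homomorphism, and
collapsing each copy of `H` onto an endpoint of its edge turns walks into walks that are no
longer. So the two ends of the path are at distance `m - 1`. Conversely, a vertex of the copy of
`H` on the edge `{a, a + 1}` is adjacent to both `a` and `a + 1`, so any two vertices are joined
through the path by a walk of length at most `m - 1`; two vertices of the same copy are adjacent
because `H` is complete.
-/
namespace SimpleGraph

variable {V V' : Type*} {G : SimpleGraph V} {G' : SimpleGraph V'}

lemma edist_map_le (f : V → V') (hf : ∀ ⦃x y⦄, G.Adj x y → f x = f y ∨ G'.Adj (f x) (f y))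
    (x y : V) : G'.edist (f x) (f y) ≤ G.edist x y := by
  refine le_iInf fun p => ?_
  induction p with
  | nil => simp
  | @cons x y z h p ih =>
    calc G'.edist (f x) (f z) ≤ G'.edist (f x) (f y) + G'.edist (f y) (f z) := G'.edist_triangle
      _ ≤ 1 + p.length := add_le_add (edist_le_one_iff_adj_or_eq.2 (hf h).symm) ih
      _ = (Walk.cons h p).length := by rw [Walk.length_cons, Nat.cast_add_one, add_comm]

lemma Walk.apply_le_apply_add_length (f : V → ℕ) (hf : ∀ ⦃x y⦄, G.Adj x y → f x ≤ f y + 1)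
    {x y : V} (p : G.Walk x y) : f x ≤ f y + p.length := by
  induction p with
  | nil => simp
  | cons h p ih => have := hf h; rw [Walk.length_cons]; omega

lemma sub_le_edist_of_forall_adj (f : V → ℕ) (hf : ∀ ⦃x y⦄, G.Adj x y → f x ≤ f y + 1)
    (x y : V) :
    ((f x - f y : ℕ) : ℕ∞) ≤ G.edist x y :=
  le_iInf fun p => by have := p.apply_le_apply_add_length f hf; norm_cast; omega

end SimpleGraph

open SimpleGraph

section PathGraph

variable {m : ℕ}

lemma pathGraph_edist_le_of_add_eq {u v : Fin m} {k : ℕ} (h : (u : ℕ) + k = v) :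
    (pathGraph m).edist u v ≤ k := by
  induction k generalizing u with
  | zero => simp [Fin.ext (by omega : (u : ℕ) = v)]
  | succ k ih =>
    let u' : Fin m := ⟨u + 1, by omega⟩
    have hadj : (pathGraph m).Adj u u' := pathGraph_adj.2 (Or.inl rfl)
    calc (pathGraph m).edist u v ≤ (pathGraph m).edist u u' + (pathGraph m).edist u' v :=
          SimpleGraph.edist_triangle
      _ ≤ 1 + k :=
          add_le_add (edist_le_one_iff_adj_or_eq.2 (Or.inl hadj)) (ih (by simp [u']; omega))
      _ = (k + 1 : ℕ) := by push_cast; ring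

lemma pathGraph_edist_of_le {u v : Fin m} (h : u ≤ v) :
    (pathGraph m).edist u v = ((v - u : ℕ) : ℕ∞) := by
  refine le_antisymm (pathGraph_edist_le_of_add_eq (by omega)) ?_
  rw [edist_comm]
  exact sub_le_edist_of_forall_adj Fin.val (fun x y hxy => by rw [pathGraph_adj] at hxy; omega) v u

lemma exists_pathGraph_edge_eq (e : (pathGraph m).edgeSet) :
    ∃ a b : Fin m, (a : ℕ) + 1 = b ∧ (e : Sym2 (Fin m)) = s(a, b) := by
  obtain ⟨e, he⟩ := e
  induction e with
  | _ x y =>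
    rcases pathGraph_adj.1 he with h | h
    · exact ⟨x, y, h, rfl⟩
    · exact ⟨y, x, h, Sym2.eq_swap⟩

end PathGraph

section EdgeCorona

variable {V W : Type*} {G : SimpleGraph V} {H : SimpleGraph W}

lemma edgeCorona_adj_inl_inr {u : V} {e : G.edgeSet} (w : W) (hu : u ∈ (e : Sym2 V)) :
    (edgeCorona G H).Adj (.inl u) (.inr (e, w)) :=
  hu

lemma edgeCorona_edist_inl (u v : V) :
    (edgeCorona G H).edist (.inl u) (.inl v) = G.edist u v := by
  refine le_antisymm (edist_map_le Sum.inl (fun _ _ h => Or.inr h) u v) ?_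
  let r : V ⊕ (G.edgeSet × W) → V := Sum.elim id fun x => (x.1 : Sym2 V).out.1
  have hr : ∀ ⦃x y⦄, (edgeCorona G H).Adj x y → r x = r y ∨ G.Adj (r x) (r y) := by
    have hmem : ∀ (u : V) (e : G.edgeSet), u ∈ (e : Sym2 V) →
        u = (e : Sym2 V).out.1 ∨ G.Adj u (e : Sym2 V).out.1 := by
      intro u e hu
      by_cases h : u = (e : Sym2 V).out.1
      · exact Or.inl h
      · refine Or.inr ?_
        rw [← mem_edgeSet, ← (Sym2.mem_and_mem_iff h).1 ⟨hu, Sym2.out_fst_mem _⟩]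
        exact e.2
    rintro (u | ⟨e, w⟩) (v | ⟨e', w'⟩) h
    · exact Or.inr h
    · exact hmem u e' h
    · exact (hmem v e h).imp Eq.symm G.adj_symm
    · obtain ⟨rfl, -⟩ := h
      exact Or.inl rfl
  exact edist_map_le r hr (.inl u) (.inl v)

lemma edgeCorona_edist_inr_le {u : V} {e : G.edgeSet} {x : V ⊕ (G.edgeSet × W)} (w : W)
    (hu : u ∈ (e : Sym2 V)) :
    (edgeCorona G H).edist (.inr (e, w)) x ≤ 1 + (edgeCorona G H).edist (.inl u) x := by
  refine (SimpleGraph.edist_triangle (v := .inl u)).trans (add_le_add_left ?_ _)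
  exact edist_le_one_iff_adj_or_eq.2 (Or.inl (edgeCorona_adj_inl_inr w hu).symm)

end EdgeCorona

section PathCorona

variable {m : ℕ} {W : Type*}

local notation "C" => edgeCorona (pathGraph m) (⊤ : SimpleGraph W)

lemma edgeCorona_pathGraph_edist_inl_inl (u v : Fin m) :
    (C).edist (.inl u) (.inl v) ≤ ((m - 1 : ℕ) : ℕ∞) := by
  rw [edgeCorona_edist_inl]
  rcases le_total u v with h | h
  · rw [pathGraph_edist_of_le h]; norm_cast; omega
  · rw [SimpleGraph.edist_comm, pathGraph_edist_of_le h]; norm_cast; omega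

lemma edgeCorona_pathGraph_edist_inr_inl {a b : Fin m} (hab : (a : ℕ) + 1 = b)
    {e : (pathGraph m).edgeSet} (he : (e : Sym2 (Fin m)) = s(a, b)) (w : W) (v : Fin m) :
    (C).edist (.inr (e, w)) (.inl v) ≤ ((m - 1 : ℕ) : ℕ∞) := by
  rcases le_or_gt v a with h | h
  · calc (C).edist (.inr (e, w)) (.inl v) ≤ 1 + (C).edist (.inl a) (.inl v) :=
          edgeCorona_edist_inr_le w (by simp [he])
      _ = ((1 + (a - v) : ℕ) : ℕ∞) := by
          rw [edgeCorona_edist_inl, SimpleGraph.edist_comm, pathGraph_edist_of_le h]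
          push_cast; rfl
      _ ≤ ((m - 1 : ℕ) : ℕ∞) := by norm_cast; omega
  · calc (C).edist (.inr (e, w)) (.inl v) ≤ 1 + (C).edist (.inl b) (.inl v) :=
          edgeCorona_edist_inr_le w (by simp [he])
      _ = ((1 + (v - b) : ℕ) : ℕ∞) := by
          rw [edgeCorona_edist_inl, pathGraph_edist_of_le (by omega)]; push_cast; rfl
      _ ≤ ((m - 1 : ℕ) : ℕ∞) := by norm_cast; omega

lemma edgeCorona_pathGraph_edist_inr_inr {a b a' b' : Fin m} (hab : (a : ℕ) + 1 = b)
    (hab' : (a' : ℕ) + 1 = b') (hba' : b ≤ a') {e e' : (pathGraph m).edgeSet}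
    (he : (e : Sym2 (Fin m)) = s(a, b)) (he' : (e' : Sym2 (Fin m)) = s(a', b')) (w w' : W) :
    (C).edist (.inr (e, w)) (.inr (e', w')) ≤ ((m - 1 : ℕ) : ℕ∞) :=
  calc (C).edist (.inr (e, w)) (.inr (e', w')) ≤ 1 + (C).edist (.inl b) (.inr (e', w')) :=
        edgeCorona_edist_inr_le w (by simp [he])
    _ = 1 + (C).edist (.inr (e', w')) (.inl b) := by rw [SimpleGraph.edist_comm]
    _ ≤ 1 + (1 + (C).edist (.inl a') (.inl b)) := by
        gcongr; exact edgeCorona_edist_inr_le w' (by simp [he'])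
    _ = ((2 + (a' - b) : ℕ) : ℕ∞) := by
        rw [edgeCorona_edist_inl, SimpleGraph.edist_comm, pathGraph_edist_of_le hba', ← add_assoc]
        push_cast; rfl
    _ ≤ ((m - 1 : ℕ) : ℕ∞) := by norm_cast; omega

lemma edgeCorona_pathGraph_edist_le (x y : Fin m ⊕ ((pathGraph m).edgeSet × W)) :
    (C).edist x y ≤ ((m - 1 : ℕ) : ℕ∞) := by
  rcases x with u | ⟨e, w⟩ <;> rcases y with v | ⟨e', w'⟩
  · exact edgeCorona_pathGraph_edist_inl_inl u v
  · obtain ⟨a, b, hab, he⟩ := exists_pathGraph_edge_eq e'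
    rw [SimpleGraph.edist_comm]
    exact edgeCorona_pathGraph_edist_inr_inl hab he w' u
  · obtain ⟨a, b, hab, he⟩ := exists_pathGraph_edge_eq e
    exact edgeCorona_pathGraph_edist_inr_inl hab he w v
  · obtain ⟨a, b, hab, he⟩ := exists_pathGraph_edge_eq e
    obtain ⟨a', b', hab', he'⟩ := exists_pathGraph_edge_eq e'
    rcases lt_trichotomy a a' with h | rfl | h
    · exact edgeCorona_pathGraph_edist_inr_inr hab hab' (by omega) he he' w w'
    · obtain rfl : e = e' := Subtype.ext (by rw [he, he', Fin.ext (hab.symm.trans hab')])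
      calc (C).edist (.inr (e, w)) (.inr (e, w')) ≤ 1 := by
            rw [edist_le_one_iff_adj_or_eq]
            by_cases hw : w = w'
            · exact Or.inr (by rw [hw])
            · exact Or.inl ⟨rfl, hw⟩
        _ ≤ ((m - 1 : ℕ) : ℕ∞) := by norm_cast; omega
    · rw [SimpleGraph.edist_comm]
      exact edgeCorona_pathGraph_edist_inr_inr hab' hab (by omega) he' he w' w

lemma edgeCorona_pathGraph_ediam : (C).ediam = ((m - 1 : ℕ) : ℕ∞) := by
  refine le_antisymm (ediam_le_of_edist_le edgeCorona_pathGraph_edist_le) ?_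
  rcases Nat.eq_zero_or_pos m with rfl | hm
  · exact bot_le
  let first : Fin m := ⟨0, hm⟩
  let last : Fin m := ⟨m - 1, by omega⟩
  calc ((m - 1 : ℕ) : ℕ∞) = (pathGraph m).edist first last := by
        rw [pathGraph_edist_of_le (show first ≤ last from Nat.zero_le _), Nat.sub_zero]
    _ = (C).edist (.inl first) (.inl last) := (edgeCorona_edist_inl _ _).symm
    _ ≤ (C).ediam := edist_le_ediam

end PathCorona

theorem stmt12_general (m n : ℕ) :
    (edgeCorona (SimpleGraph.pathGraph m) (⊤ : SimpleGraph (Fin n))).diam = m - 1 := by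
  rw [SimpleGraph.diam, edgeCorona_pathGraph_ediam, ENat.toNat_natCast]

theorem stmt12 (m n : ℕ) (hm : 2 ≤ m) (hn : 2 ≤ n) :
    (edgeCorona (SimpleGraph.pathGraph m) (⊤ : SimpleGraph (Fin n))).diam = m - 1 :=
  stmt12_general m n
end
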